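/- Taking U = Ker(Ŝ^T) with the orthogonal complement of Ker(Ŝ^T) being Im(Ŝ): for every x̂_0 ∈ R^m_{>0} there exists a unique μ ∈ Ker(Ŝ^T) such that D_1(x̂^*·Exp(μ) − x̂_0) ∈ Im(Ŝ). -/

import Mathlib

/-!
The solution is the critical point on `U = Ker Ŝᵀ` of the potential
`f μ = ∑ i, dᵢ (x̂*ᵢ e^{μᵢ} - x̂₀ᵢ μᵢ)`, whose gradient is `D₁(x̂*·Exp(μ) - x̂₀)`; this gradient lies
in `Im Ŝ = Uᗮ` exactly when `μ` is critical along `U`. Since `f` grows at least linearly in each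
coordinate it attains its minimum on `U`, which gives existence. The gradient is strictly
monotone in each coordinate, so `(μ - ν) ⬝ᵥ (∇f μ - ∇f ν) > 0` for `μ ≠ ν`, while this vanishes
when `μ - ν ∈ U` and both gradients lie in `Uᗮ`; hence uniqueness.
-/

open Filter Matrix Real

theorem Matrix.mem_range_mulVecLin_iff_forall_dotProduct_eq_zero {m n : Type*} [Fintype m]
    [Fintype n] [DecidableEq m] [DecidableEq n] (A : Matrix m n ℝ) (w : m → ℝ) :
    w ∈ LinearMap.range A.mulVecLin ↔ ∀ v ∈ LinearMap.ker Aᵀ.mulVecLin, v ⬝ᵥ w = 0 := by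
  have h := LinearMap.orthogonal_ker (toEuclideanLin Aᴴ)
  rw [← toEuclideanLin_conjTranspose_eq_adjoint, conjTranspose_conjTranspose] at h
  have hw : w ∈ LinearMap.range A.mulVecLin ↔
      WithLp.toLp 2 w ∈ LinearMap.range (toEuclideanLin A) :=
    ⟨fun ⟨y, hy⟩ => ⟨WithLp.toLp 2 y, by simpa [toLpLin_apply] using hy⟩,
      fun ⟨y, hy⟩ => ⟨y.ofLp, by simpa [toLpLin_apply] using hy⟩⟩
  rw [hw, ← h, Submodule.mem_orthogonal, (WithLp.equiv 2 (m → ℝ)).forall_congr_left]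
  simp [EuclideanSpace.inner_eq_star_dotProduct, toLpLin_apply,
    conjTranspose_eq_transpose_of_trivial, dotProduct_comm w, mulVec_transpose]

theorem mul_abs_sub_le_mul_exp_sub_mul {a : ℝ} (ha : 0 < a) (b t : ℝ) :
    b * |t| - 2 * b ^ 2 / a ≤ a * exp t - b * t := by
  have hC : 0 ≤ 2 * b ^ 2 / a := by positivity
  rcases le_or_gt 0 t with ht | ht
  · rw [abs_of_nonneg ht]
    have hexp := mul_le_mul_of_nonneg_left (quadratic_le_exp_of_nonneg ht) ha.le
    have hsq : 0 ≤ a / 2 * (t - 2 * b / a) ^ 2 := by positivity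
    have hexpand : a / 2 * (t - 2 * b / a) ^ 2 =
        a * (t ^ 2 / 2) - 2 * (b * t) + 2 * b ^ 2 / a := by
      field_simp; ring
    nlinarith [mul_nonneg ha.le ht]
  · rw [abs_of_neg ht]
    nlinarith [exp_pos t]

theorem StrictMono.sub_mul_sub_pos {α : Type*} [Ring α] [LinearOrder α] [IsStrictOrderedRing α]
    {f : α → α} (hf : StrictMono f) {x y : α} (h : x ≠ y) : 0 < (x - y) * (f x - f y) := by
  rcases h.lt_or_gt with hxy | hxy
  · exact mul_pos_of_neg_of_neg (sub_neg.2 hxy) (sub_neg.2 (hf hxy))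
  · exact mul_pos (sub_pos.2 hxy) (sub_pos.2 (hf hxy))

section ExpPotential

variable {ι : Type*} [Fintype ι] (a b : ι → ℝ)

noncomputable def expPotential (μ : ι → ℝ) : ℝ := ∑ i, (a i * exp (μ i) - b i * μ i)

noncomputable def expGradient (μ : ι → ℝ) : ι → ℝ := fun i => a i * exp (μ i) - b i

theorem continuous_expPotential : Continuous (expPotential a b) := by
  unfold expPotential; fun_prop

variable {a b}

theorem mul_abs_sub_le_expPotential (ha : ∀ i, 0 < a i) (hb : ∀ i, 0 ≤ b i) (μ : ι → ℝ)
    (i : ι) : b i * |μ i| - ∑ j, 2 * b j ^ 2 / a j ≤ expPotential a b μ :=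
  calc b i * |μ i| - ∑ j, 2 * b j ^ 2 / a j
      ≤ ∑ j, b j * |μ j| - ∑ j, 2 * b j ^ 2 / a j := by
        gcongr
        exact Finset.single_le_sum (f := fun j => b j * |μ j|)
          (fun j _ => mul_nonneg (hb j) (abs_nonneg _)) (Finset.mem_univ i)
    _ = ∑ j, (b j * |μ j| - 2 * b j ^ 2 / a j) := Finset.sum_sub_distrib _ _ |>.symm
    _ ≤ expPotential a b μ :=
        Finset.sum_le_sum fun j _ => mul_abs_sub_le_mul_exp_sub_mul (ha j) (b j) (μ j)

theorem tendsto_expPotential_cocompact (ha : ∀ i, 0 < a i) (hb : ∀ i, 0 < b i) :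
    Tendsto (expPotential a b) (cocompact (ι → ℝ)) atTop := by
  rw [← coprodᵢ_cocompact, Filter.coprodᵢ, tendsto_iSup]
  intro i
  have habs : Tendsto (fun μ : ι → ℝ => |μ i|) (comap (Function.eval i) (cocompact ℝ)) atTop :=
    tendsto_norm_cocompact_atTop.comp tendsto_comap
  exact tendsto_atTop_mono (mul_abs_sub_le_expPotential ha (fun j => (hb j).le) · i)
    (tendsto_atTop_add_const_right _ _ (habs.const_mul_atTop (hb i)))

theorem exists_isMinOn_expPotential (ha : ∀ i, 0 < a i) (hb : ∀ i, 0 < b i)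
    (K : Submodule ℝ (ι → ℝ)) : ∃ μ ∈ K, IsMinOn (expPotential a b) K μ :=
  (continuous_expPotential a b).continuousOn.exists_isMinOn' K.closed_of_finiteDimensional
    K.zero_mem <| ((tendsto_expPotential_cocompact ha hb).eventually_ge_atTop _).filter_mono
      inf_le_left

theorem hasDerivAt_expPotential_add_smul (μ v : ι → ℝ) :
    HasDerivAt (fun t : ℝ => expPotential a b (μ + t • v)) (v ⬝ᵥ expGradient a b μ) 0 := by
  have hline (i : ι) : HasDerivAt (fun t : ℝ => μ i + t * v i) (v i) 0 := by
    simpa using (hasDerivAt_mul_const (v i)).const_add (μ i)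
  refine (HasDerivAt.fun_sum (u := Finset.univ) fun i _ =>
    ((hline i).exp.const_mul (a i)).fun_sub ((hline i).const_mul (b i))).congr_deriv ?_
  simp only [dotProduct, expGradient, zero_mul, add_zero]
  exact Finset.sum_congr rfl fun i _ => by ring

theorem dotProduct_expGradient_eq_zero_of_isMinOn {K : Submodule ℝ (ι → ℝ)} {μ v : ι → ℝ}
    (hμ : μ ∈ K) (hmin : IsMinOn (expPotential a b) K μ) (hv : v ∈ K) :
    v ⬝ᵥ expGradient a b μ = 0 := by
  refine IsLocalMin.hasDerivAt_eq_zero (Eventually.of_forall fun t => ?_)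
    (hasDerivAt_expPotential_add_smul μ v)
  simpa using hmin (K.add_mem hμ (K.smul_mem t hv))

theorem dotProduct_sub_expGradient_pos (ha : ∀ i, 0 < a i) {μ ν : ι → ℝ} (h : μ ≠ ν) :
    0 < (μ - ν) ⬝ᵥ (expGradient a b μ - expGradient a b ν) := by
  have hmono (i : ι) : StrictMono fun t => a i * exp t - b i := fun x y hxy =>
    sub_lt_sub_right (mul_lt_mul_of_pos_left (exp_lt_exp.2 hxy) (ha i)) _
  obtain ⟨i, hi⟩ := Function.ne_iff.1 h
  refine Finset.sum_pos' (fun j _ => ?_) ⟨i, Finset.mem_univ i, (hmono i).sub_mul_sub_pos hi⟩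
  rcases eq_or_ne (μ j) (ν j) with hj | hj
  · simp [hj]
  · exact ((hmono j).sub_mul_sub_pos hj).le

end ExpPotential

/-- For every positive `x̂₀` there is a unique `μ ∈ Ker(Ŝᵀ)` such that
`D₁(x̂*·Exp(μ) − x̂₀) ∈ Im(Ŝ)`. -/
theorem unique_mu_in_kernel_with_gradient_in_image
    (m rh : ℕ) (Sh : Matrix (Fin m) (Fin rh) ℝ)
    (xs d : Fin m → ℝ) (hxs : ∀ i, 0 < xs i) (hd : ∀ i, 0 < d i)
    (x0 : Fin m → ℝ) (hx0 : ∀ i, 0 < x0 i) :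
    ∃! μ : Fin m → ℝ, μ ∈ LinearMap.ker Sh.transpose.mulVecLin ∧
      (fun i => d i * (xs i * Real.exp (μ i) - x0 i)) ∈
        LinearMap.range Sh.mulVecLin := by
  set a : Fin m → ℝ := fun i => d i * xs i
  set b : Fin m → ℝ := fun i => d i * x0 i
  have hgrad (μ : Fin m → ℝ) :
      expGradient a b μ = fun i => d i * (xs i * Real.exp (μ i) - x0 i) := by
    ext i; simp only [expGradient, a, b]; ring
  have hperp := Sh.mem_range_mulVecLin_iff_forall_dotProduct_eq_zero
  obtain ⟨μ, hμK, hmin⟩ := exists_isMinOn_expPotential (fun i => mul_pos (hd i) (hxs i))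
    (fun i => mul_pos (hd i) (hx0 i)) (LinearMap.ker Shᵀ.mulVecLin)
  have hμR : expGradient a b μ ∈ LinearMap.range Sh.mulVecLin :=
    (hperp _).2 fun v hv => dotProduct_expGradient_eq_zero_of_isMinOn hμK hmin hv
  refine ⟨μ, ⟨hμK, hgrad μ ▸ hμR⟩, fun ν ⟨hνK, hνR⟩ => ?_⟩
  by_contra hne
  refine (dotProduct_sub_expGradient_pos (b := b) (fun i => mul_pos (hd i) (hxs i)) hne).ne' ?_
  exact (hperp _).1 (sub_mem (hgrad ν ▸ hνR) hμR) _ (sub_mem hνK hμK)
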